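/- Signed-bias lower bound under a margin representation: let S be a finite index set, and let w ≥ 0, δ ≥ 0, B ≥ 0, r ∈ ℝ. For each t ∈ S, let π_t ≥ 0, and let h_t, f_t, μ_t be reals satisfying h_t (f_t - r) ≥ (3/4) |f_t - r|, |f_t - r| ≥ δ, and |h_t| ≤ B. Then ∑_{t∈S} π_t h_t (μ_t - r) ≥ ( (3/4) δ - B w ) ∑_{t∈S} π_t - B ∑_{t∈S} π_t ( |μ_t - f_t| - w )₊, where (a)₊ := max{a, 0}. -/
import Mathlib


/-- **Signed-bias lower bound under a margin representation.** Let `S` be a finite index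
set, `w ≥ 0`, `δ ≥ 0`, `B ≥ 0`, `r ∈ ℝ`, and for each `t ∈ S` let `π t ≥ 0` and reals
`h t`, `f t`, `μ t` with `h t (f t - r) ≥ (3/4) |f t - r|`, `|f t - r| ≥ δ`, `|h t| ≤ B`.
Then `∑ π t h t (μ t - r) ≥ ((3/4) δ - B w) ∑ π t - B ∑ π t (|μ t - f t| - w)₊`. -/
theorem signed_bias_lower_bound
    {ι : Type*} (S : Finset ι) (w δ B r : ℝ)
    (hw : 0 ≤ w) (hδ : 0 ≤ δ) (hB : 0 ≤ B)
    (π h f μ : ι → ℝ)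
    (hπ : ∀ t ∈ S, 0 ≤ π t)
    (hmargin : ∀ t ∈ S, (3 / 4) * |f t - r| ≤ h t * (f t - r))
    (hfar : ∀ t ∈ S, δ ≤ |f t - r|)
    (hhB : ∀ t ∈ S, |h t| ≤ B) :
    ((3 / 4) * δ - B * w) * (∑ t ∈ S, π t) -
        B * ∑ t ∈ S, π t * max (|μ t - f t| - w) 0
      ≤ ∑ t ∈ S, π t * (h t * (μ t - r)) := by
  have key : ∑ t ∈ S, π t * ((3 / 4) * δ - B * w - B * max (|μ t - f t| - w) 0)
      ≤ ∑ t ∈ S, π t * (h t * (μ t - r)) := by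
    refine Finset.sum_le_sum fun t ht => ?_
    refine mul_le_mul_of_nonneg_left ?_ (hπ t ht)
    have h1 : h t * (μ t - r) = h t * (f t - r) + h t * (μ t - f t) := by ring
    have h2 : (3 / 4) * δ ≤ h t * (f t - r) :=
      le_trans (by nlinarith [hfar t ht]) (hmargin t ht)
    have h3 : -(B * |μ t - f t|) ≤ h t * (μ t - f t) := by
      have := abs_mul (h t) (μ t - f t)
      have h4 : |h t * (μ t - f t)| ≤ B * |μ t - f t| := by
        rw [this]; exact mul_le_mul_of_nonneg_right (hhB t ht) (abs_nonneg _)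
      linarith [neg_abs_le (h t * (μ t - f t))]
    have h5 : |μ t - f t| ≤ w + max (|μ t - f t| - w) 0 := by
      rcases le_total (|μ t - f t|) w with hle | hle
      · have : max (|μ t - f t| - w) 0 = 0 := max_eq_right (by linarith)
        rw [this]; linarith
      · have : max (|μ t - f t| - w) 0 = |μ t - f t| - w := max_eq_left (by linarith)
        rw [this]; linarith
    nlinarith [mul_le_mul_of_nonneg_left h5 hB]
  calc ((3 / 4) * δ - B * w) * (∑ t ∈ S, π t) -
        B * ∑ t ∈ S, π t * max (|μ t - f t| - w) 0
      = ∑ t ∈ S, π t * ((3 / 4) * δ - B * w - B * max (|μ t - f t| - w) 0) := by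
        rw [Finset.mul_sum, Finset.mul_sum, ← Finset.sum_sub_distrib]
        exact Finset.sum_congr rfl fun t _ => by ring
    _ ≤ _ := key
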